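/- On M = ℝ², Weinstein's three-point function S_can((a₁,ℓ₁),(a₂,ℓ₂),(a₃,ℓ₃)) = sinh(a₁−a₂)ℓ₃ + sinh(a₂−a₃)ℓ₁ + sinh(a₃−a₁)ℓ₂ is a 3-cochain for the symmetric space structure: (i) it is totally antisymmetric, i.e. for every permutation σ of {1,2,3}, S_can(y_{σ(1)}, y_{σ(2)}, y_{σ(3)}) = sign(σ) · S_can(y₁, y₂, y₃); and (ii) it is invariant under the diagonal action of every symmetry: S_can(s_x(y₁), s_x(y₂), s_x(y₃)) = S_can(y₁, y₂, y₃) for all x, y₁, y₂, y₃ ∈ M. -/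

import Mathlib

/-- The symmetry `s_{(a,ℓ)}(a',ℓ') = (2a - a', 2cosh(a - a')ℓ - ℓ')`. -/
noncomputable def symmPoincare (x y : ℝ × ℝ) : ℝ × ℝ :=
  (2 * x.1 - y.1, 2 * Real.cosh (x.1 - y.1) * x.2 - y.2)

/-- Weinstein's three-point function
`S_can((a₁,ℓ₁),(a₂,ℓ₂),(a₃,ℓ₃)) = sinh(a₁−a₂)ℓ₃ + sinh(a₂−a₃)ℓ₁ + sinh(a₃−a₁)ℓ₂`. -/
noncomputable def Scan (x y z : ℝ × ℝ) : ℝ :=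
  Real.sinh (x.1 - y.1) * z.2 + Real.sinh (y.1 - z.1) * x.2
    + Real.sinh (z.1 - x.1) * y.2

/-- `S_can` is a 3-cochain: totally antisymmetric and invariant
under the diagonal action of every symmetry. -/
theorem Scan_is_three_cochain :
    (∀ (σ : Equiv.Perm (Fin 3)) (y : Fin 3 → ℝ × ℝ),
      Scan (y (σ 0)) (y (σ 1)) (y (σ 2)) =
        ((Equiv.Perm.sign σ : ℤ) : ℝ) * Scan (y 0) (y 1) (y 2)) ∧
    (∀ x y₁ y₂ y₃ : ℝ × ℝ,
      Scan (symmPoincare x y₁) (symmPoincare x y₂) (symmPoincare x y₃) =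
        Scan y₁ y₂ y₃) := by
  constructor
  · intro σ y
    have key : ∀ τ : Equiv.Perm (Fin 3), (τ 0, τ 1, τ 2, Equiv.Perm.sign τ) ∈
        ([(0,1,2,1),(0,2,1,-1),(1,0,2,-1),(1,2,0,1),(2,0,1,1),(2,1,0,-1)] :
          List (Fin 3 × Fin 3 × Fin 3 × ℤˣ)) := by decide
    have hk := key σ
    simp only [List.mem_cons, List.not_mem_nil, or_false, Prod.mk.injEq] at hk
    rcases hk with ⟨h0, h1, h2, hs⟩ | ⟨h0, h1, h2, hs⟩ | ⟨h0, h1, h2, hs⟩ |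
        ⟨h0, h1, h2, hs⟩ | ⟨h0, h1, h2, hs⟩ | ⟨h0, h1, h2, hs⟩ <;>
      rw [h0, h1, h2, hs] <;>
      simp [Scan, Real.sinh_sub] <;> ring
  · intro x y₁ y₂ y₃
    simp only [Scan, symmPoincare]
    have h : ∀ u v : ℝ, 2 * x.1 - u - (2 * x.1 - v) = v - u := fun u v => by ring
    rw [h, h, h]
    simp only [Real.sinh_sub, Real.cosh_sub]
    ring
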